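/- arXiv:2006.13091 — 6 statements merged into one kernel-verified Lean document; each statement's English description precedes it below -/
import Mathlib

section
/- Let X, Y, Z be random variables taking values in Borel (standard Borel) spaces such that (X,Y) and (X,Z) have the same joint distribution and σ(Y) ⊆ σ(Z). Then X and Z are conditionally independent given Y. -/
open ProbabilityTheory MeasureTheory

/-! Fix a measurable `s` and put `u = P(X ∈ s | Y)`, `v = P(X ∈ s | Z)`. Since `σ(Y) ⊆ σ(Z)`, `u` is
the `L²`-projection of `v`, so `‖v - u‖₂² = ‖v‖₂² - ‖u‖₂²`. Equal laws of `(X, Y)` and `(X, Z)` give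
one kernel `p = condDistrib X Y μ = condDistrib X Z μ` with `u = p s ∘ Y`, `v = p s ∘ Z`, and `Y`, `Z`
have the same law, so `‖u‖₂ = ‖v‖₂` and `u = v` a.e. Conditioning on `Z` then tells nothing more
about `X` than conditioning on `Y`, which is conditional independence of `X` and `Z` given `Y`. -/

theorem condExp_ae_eq_of_le_of_integral_sq_eq {Ω : Type*} {m₁ m₂ mΩ : MeasurableSpace Ω}
    {μ : Measure Ω} [IsFiniteMeasure μ] (h₁₂ : m₁ ≤ m₂) (h₂ : m₂ ≤ mΩ) {f : Ω → ℝ}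
    (hf : MemLp f 2 μ) (hsq : ∫ ω, (μ[f | m₂] ω) ^ 2 ∂μ = ∫ ω, (μ[f | m₁] ω) ^ 2 ∂μ) :
    μ[f | m₁] =ᵐ[μ] μ[f | m₂] := by
  set u := μ[f | m₁]
  set v := μ[f | m₂]
  have hu : MemLp u 2 μ := hf.condExp one_le_two
  have hv : MemLp v 2 μ := hf.condExp one_le_two
  have huv : Integrable (u * v) μ := hu.integrable_mul hv
  have hcross : ∫ ω, (u * v) ω ∂μ = ∫ ω, u ω ^ 2 ∂μ := calc
    ∫ ω, (u * v) ω ∂μ = ∫ ω, μ[u * v | m₁] ω ∂μ := (integral_condExp (h₁₂.trans h₂)).symm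
    _ = ∫ ω, (u * μ[v | m₁]) ω ∂μ := integral_congr_ae <|
      condExp_mul_of_stronglyMeasurable_left stronglyMeasurable_condExp huv (hv.integrable one_le_two)
    _ = ∫ ω, u ω ^ 2 ∂μ := integral_congr_ae <| by
      have htower : μ[v | m₁] =ᵐ[μ] u := condExp_condExp_of_le h₁₂ h₂
      filter_upwards [htower] with ω hω
      rw [Pi.mul_apply, hω, sq]
  have hdiff : ∫ ω, (v ω - u ω) ^ 2 ∂μ = 0 := by
    have hexpand : ∀ ω, (v ω - u ω) ^ 2 = v ω ^ 2 - 2 * (u * v) ω + u ω ^ 2 := fun ω => by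
      simp only [Pi.mul_apply]; ring
    have hint : Integrable (fun ω => v ω ^ 2 - 2 * (u * v) ω) μ :=
      hv.integrable_sq.sub (huv.const_mul 2)
    simp_rw [hexpand]
    rw [integral_add hint hu.integrable_sq,
      integral_sub hv.integrable_sq (huv.const_mul 2), integral_const_mul, hcross, hsq]
    ring
  have hsq_zero := (integral_eq_zero_iff_of_nonneg (fun ω => sq_nonneg (v ω - u ω))
    ((hv.sub hu).integrable_sq)).1 hdiff
  filter_upwards [hsq_zero] with ω hω
  simpa [sub_eq_zero, eq_comm] using hω

theorem condIndep_of_condExp_indicator_ae_eq {Ω : Type*} {m m₁ m₂ mΩ : MeasurableSpace Ω}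
    [StandardBorelSpace Ω] {μ : Measure Ω} [IsFiniteMeasure μ] (hm : m ≤ m₂) (h₁ : m₁ ≤ mΩ)
    (h₂ : m₂ ≤ mΩ) (h : ∀ s, MeasurableSet[m₁] s → μ⟦s | m⟧ =ᵐ[μ] μ⟦s | m₂⟧) :
    CondIndep m m₁ m₂ (hm.trans h₂) μ := by
  rw [condIndep_iff _ _ _ _ h₁ h₂]
  intro s t hs ht
  set χs : Ω → ℝ := s.indicator 1
  set χt : Ω → ℝ := t.indicator 1
  have hst : (s ∩ t).indicator 1 = χt * χs := by rw [Set.inter_comm]; exact Set.inter_indicator_one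
  have hs_int : Integrable χs μ := (integrable_const 1).indicator (h₁ s hs)
  have ht_int : Integrable χt μ := (integrable_const 1).indicator (h₂ t ht)
  have ht_meas : StronglyMeasurable[m₂] χt := stronglyMeasurable_const.indicator ht
  have ht_bdd : ∀ᵐ ω ∂μ, ‖χt ω‖ ≤ 1 :=
    ae_of_all _ fun ω => (norm_indicator_le_norm_self 1 ω).trans (by simp)
  calc μ⟦s ∩ t | m⟧ =ᵐ[μ] μ[μ[χt * χs | m₂] | m] := by
        rw [← hst]; exact (condExp_condExp_of_le hm h₂).symm
    _ =ᵐ[μ] μ[μ[χs | m] * χt | m] := by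
      refine condExp_congr_ae ?_
      filter_upwards [condExp_mul_of_stronglyMeasurable_left ht_meas
        (hs_int.bdd_mul ht_int.1 ht_bdd) hs_int, h s hs] with ω hpull hs_eq
      rw [hpull, Pi.mul_apply, Pi.mul_apply, mul_comm]
      exact congrArg (· * χt ω) hs_eq.symm
    _ =ᵐ[μ] μ[χs | m] * μ[χt | m] :=
      condExp_mul_of_stronglyMeasurable_left stronglyMeasurable_condExp
        (integrable_condExp.mul_bdd ht_int.1 ht_bdd) ht_int

section SameJointLaw

variable {Ω α β : Type*} {mΩ : MeasurableSpace Ω} {mα : MeasurableSpace α}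
  {mβ : MeasurableSpace β} {μ : Measure Ω} {X : Ω → α} {Y Z : Ω → β}

theorem map_eq_map_of_map_prod_eq (hX : Measurable X) (hY : Measurable Y) (hZ : Measurable Z)
    (hdist : μ.map (fun ω => (X ω, Y ω)) = μ.map (fun ω => (X ω, Z ω))) :
    μ.map Y = μ.map Z := by
  have h := congrArg (Measure.map Prod.snd) hdist
  rwa [Measure.map_map measurable_snd (hX.prodMk hY),
    Measure.map_map measurable_snd (hX.prodMk hZ)] at h

theorem condDistrib_eq_of_map_prod_eq [StandardBorelSpace α] [Nonempty α] [IsFiniteMeasure μ]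
    (hX : Measurable X) (hY : Measurable Y) (hZ : Measurable Z)
    (hdist : μ.map (fun ω => (X ω, Y ω)) = μ.map (fun ω => (X ω, Z ω))) :
    condDistrib X Y μ = condDistrib X Z μ := by
  have hswap : μ.map (fun ω => (Y ω, X ω)) = μ.map (fun ω => (Z ω, X ω)) := by
    have h := congrArg (Measure.map Prod.swap) hdist
    rwa [Measure.map_map measurable_swap (hX.prodMk hY),
      Measure.map_map measurable_swap (hX.prodMk hZ)] at h
  simp only [condDistrib_def, hswap]

theorem condExp_preimage_ae_eq_of_map_prod_eq [StandardBorelSpace α] [Nonempty α]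
    [IsFiniteMeasure μ] (hX : Measurable X) (hY : Measurable Y) (hZ : Measurable Z)
    (hdist : μ.map (fun ω => (X ω, Y ω)) = μ.map (fun ω => (X ω, Z ω)))
    (hsub : mβ.comap Y ≤ mβ.comap Z) {s : Set α} (hs : MeasurableSet s) :
    μ⟦X ⁻¹' s | mβ.comap Y⟧ =ᵐ[μ] μ⟦X ⁻¹' s | mβ.comap Z⟧ := by
  refine condExp_ae_eq_of_le_of_integral_sq_eq hsub hZ.comap_le
    (memLp_indicator_const 2 (hX hs) 1 (Or.inr (measure_ne_top μ _))) ?_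
  set p : β → ℝ := fun b => (condDistrib X Y μ b).real s
  have hp : Measurable fun b => p b ^ 2 :=
    ((condDistrib X Y μ).measurable_coe hs).ennreal_toReal.pow_const 2
  have hY_eq := condDistrib_ae_eq_condExp (μ := μ) hY hX hs
  have hZ_eq := condDistrib_ae_eq_condExp (μ := μ) hZ hX hs
  rw [← condDistrib_eq_of_map_prod_eq hX hY hZ hdist] at hZ_eq
  calc ∫ ω, (μ⟦X ⁻¹' s | mβ.comap Z⟧) ω ^ 2 ∂μ = ∫ ω, p (Z ω) ^ 2 ∂μ :=
        integral_congr_ae (by filter_upwards [hZ_eq] with ω hω; rw [← hω])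
    _ = ∫ b, p b ^ 2 ∂(μ.map Z) := (integral_map hZ.aemeasurable hp.aestronglyMeasurable).symm
    _ = ∫ b, p b ^ 2 ∂(μ.map Y) := by rw [map_eq_map_of_map_prod_eq hX hY hZ hdist]
    _ = ∫ ω, p (Y ω) ^ 2 ∂μ := integral_map hY.aemeasurable hp.aestronglyMeasurable
    _ = ∫ ω, (μ⟦X ⁻¹' s | mβ.comap Y⟧) ω ^ 2 ∂μ :=
        integral_congr_ae (by filter_upwards [hY_eq] with ω hω; rw [← hω])

end SameJointLaw

theorem stmt1_general {Ω α β : Type*} {mΩ : MeasurableSpace Ω} [StandardBorelSpace Ω]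
    {mα : MeasurableSpace α} {mβ : MeasurableSpace β}
    [StandardBorelSpace α]
    (μ : Measure Ω) [IsProbabilityMeasure μ]
    (X : Ω → α) (Y Z : Ω → β)
    (hX : Measurable X) (hY : Measurable Y) (hZ : Measurable Z)
    (hdist : μ.map (fun ω => (X ω, Y ω)) = μ.map (fun ω => (X ω, Z ω)))
    (hsub : MeasurableSpace.comap Y mβ ≤ MeasurableSpace.comap Z mβ) :
    CondIndepFun (MeasurableSpace.comap Y mβ) (hY.comap_le) X Z μ := by
  have : Nonempty α := ⟨X μ.nonempty_of_neZero.some⟩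
  rw [condIndepFun_iff_condIndep]
  refine condIndep_of_condExp_indicator_ae_eq hsub hX.comap_le hZ.comap_le ?_
  rintro _ ⟨s, hs, rfl⟩
  exact condExp_preimage_ae_eq_of_map_prod_eq hX hY hZ hdist hsub hs

/-- If `(X,Y) =ᵈ (X,Z)` and `σ(Y) ⊆ σ(Z)`, then `X` and `Z` are conditionally
independent given `Y`. -/
theorem stmt1 {Ω α β : Type*} {mΩ : MeasurableSpace Ω} [StandardBorelSpace Ω]
    {mα : MeasurableSpace α} {mβ : MeasurableSpace β}
    [StandardBorelSpace α] [StandardBorelSpace β]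
    (μ : Measure Ω) [IsProbabilityMeasure μ]
    (X : Ω → α) (Y Z : Ω → β)
    (hX : Measurable X) (hY : Measurable Y) (hZ : Measurable Z)
    (hdist : μ.map (fun ω => (X ω, Y ω)) = μ.map (fun ω => (X ω, Z ω)))
    (hsub : MeasurableSpace.comap Y mβ ≤ MeasurableSpace.comap Z mβ) :
    CondIndepFun (MeasurableSpace.comap Y mβ) (hY.comap_le) X Z μ :=
  stmt1_general (mΩ := mΩ) (mα := mα) μ X Y Z hX hY hZ hdist hsub
end

section
/- Let (X_i : i ∈ I) and (Y_i : i ∈ I) be families of Borel-valued random variables over a countable index set I, and let S be a random variable. Assume (S, X_i) has the same distribution as (S, Y_i) for each i ∈ I, and that given S, both families (X_i : i ∈ I) and (Y_i : i ∈ I) are conditionally independent families. Then (S, (X_i : i ∈ I)) and (S, (Y_i : i ∈ I)) have the same joint distribution. -/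
/-!
By the π-λ theorem it suffices to compare the two laws on the sets `{S ∈ A, X i ∈ B i for i ∈ t}`
with `t` finite. Conditional independence factors `P(X i ∈ B i for i ∈ t | S)` as the product of
the `P(X i ∈ B i | S)`, each of which is determined by the law of `(S, X i)`; integrating over
`{S ∈ A}` recovers the measure of the set.
-/

open ProbabilityTheory MeasureTheory Set

lemma Set.preimage_pi_eq_biInter {α ι : Type*} {β : ι → Type*} (f : ∀ i, α → β i) (s : Set ι)
    (t : ∀ i, Set (β i)) : (fun a i => f i a) ⁻¹' s.pi t = ⋂ i ∈ s, f i ⁻¹' t i := by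
  ext
  simp [mem_pi]

namespace MeasureTheory

section CondExpIndicator

variable {Ω : Type*} {m m₀ : MeasurableSpace Ω} {μ : Measure Ω} [IsFiniteMeasure μ]

lemma setIntegral_condExp_indicator_one (hm : m ≤ m₀) {s A : Set Ω} (hs : MeasurableSet s)
    (hA : MeasurableSet[m] A) : ∫ x in A, (μ⟦s | m⟧) x ∂μ = μ.real (A ∩ s) := by
  rw [setIntegral_condExp hm ((integrable_const 1).indicator hs) hA, integral_indicator hs,
    setIntegral_const, smul_eq_mul, mul_one, measureReal_restrict_apply hs, inter_comm]

lemma condExp_indicator_ae_eq_iff (hm : m ≤ m₀) {s t : Set Ω} (hs : MeasurableSet s)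
    (ht : MeasurableSet t) :
    μ⟦s | m⟧ =ᵐ[μ] μ⟦t | m⟧ ↔ ∀ A, MeasurableSet[m] A → μ (A ∩ s) = μ (A ∩ t) := by
  constructor
  · intro h A hA
    rw [← measureReal_eq_measureReal_iff, ← setIntegral_condExp_indicator_one hm hs hA,
      ← setIntegral_condExp_indicator_one hm ht hA]
    exact setIntegral_congr_ae (hm A hA) (h.mono fun x hx _ => hx)
  · intro h
    refine ae_eq_of_forall_setIntegral_eq_of_sigmaFinite' hm
      (fun _ _ _ => integrable_condExp.integrableOn) (fun _ _ _ => integrable_condExp.integrableOn)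
      (fun A hA _ => ?_) stronglyMeasurable_condExp.aestronglyMeasurable
      stronglyMeasurable_condExp.aestronglyMeasurable
    rw [setIntegral_condExp_indicator_one hm hs hA, setIntegral_condExp_indicator_one hm ht hA,
      measureReal_def, h A hA, measureReal_def]

lemma condExp_preimage_ae_eq_of_map_prodMk_eq {γ β : Type*} {mγ : MeasurableSpace γ}
    {mβ : MeasurableSpace β} {S : Ω → γ} {X Y : Ω → β} (hS : Measurable S) (hX : Measurable X)
    (hY : Measurable Y) (h : μ.map (fun ω => (S ω, X ω)) = μ.map (fun ω => (S ω, Y ω)))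
    {B : Set β} (hB : MeasurableSet B) :
    μ⟦X ⁻¹' B | mγ.comap S⟧ =ᵐ[μ] μ⟦Y ⁻¹' B | mγ.comap S⟧ := by
  refine (condExp_indicator_ae_eq_iff hS.comap_le (hX hB) (hY hB)).2 ?_
  rintro _ ⟨A, hA, rfl⟩
  rw [← mk_preimage_prod, ← mk_preimage_prod, ← Measure.map_apply (hS.prodMk hX) (hA.prod hB),
    ← Measure.map_apply (hS.prodMk hY) (hA.prod hB), h]

end CondExpIndicator

lemma Measure.ext_prod_squareCylinders {α ι : Type*} {β : ι → Type*} {mα : MeasurableSpace α}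
    {mβ : ∀ i, MeasurableSpace (β i)} {μ ν : Measure (α × ∀ i, β i)} [IsFiniteMeasure μ]
    (h : ∀ (A : Set α) (t : Finset ι) (B : ∀ i, Set (β i)), MeasurableSet A →
      (∀ i, MeasurableSet (B i)) → μ (A ×ˢ (t : Set ι).pi B) = ν (A ×ˢ (t : Set ι).pi B)) :
    μ = ν := by
  have h_univ : μ univ = ν univ := by
    simpa using h univ ∅ (fun _ => univ) .univ fun _ => .univ
  have : IsFiniteMeasure ν := ⟨by simp [← h_univ]⟩
  have h_cyl_univ : univ ∈ squareCylinders fun i => {s : Set (β i) | MeasurableSet s} :=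
    ⟨∅, fun _ => univ, by simp, by simp⟩
  refine ext_of_generate_finite _
    (generateFrom_eq_prod MeasurableSpace.generateFrom_measurableSet generateFrom_squareCylinders
      isCountablySpanning_measurableSet ⟨fun _ => univ, fun _ => h_cyl_univ, iUnion_const _⟩).symm
    (MeasurableSpace.isPiSystem_measurableSet.prod
      (isPiSystem_squareCylinders (fun _ => MeasurableSpace.isPiSystem_measurableSet)
        fun _ => .univ))
    ?_ h_univ
  rintro _ ⟨A, hA, _, ⟨t, B, hB, rfl⟩, rfl⟩
  exact h A t B hA (by simpa using hB)

end MeasureTheory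

namespace ProbabilityTheory

variable {Ω ι : Type*} {m m₀ : MeasurableSpace Ω} [StandardBorelSpace Ω] {hm : m ≤ m₀}
  {μ : Measure Ω} [IsFiniteMeasure μ] {β : ι → Type*} {mβ : ∀ i, MeasurableSpace (β i)}

lemma iCondIndepFun.condExp_biInter_preimage_ae_eq {X Y : ∀ i, Ω → β i}
    (hX : ∀ i, Measurable (X i)) (hY : ∀ i, Measurable (Y i))
    (hXci : iCondIndepFun m hm X μ) (hYci : iCondIndepFun m hm Y μ)
    (t : Finset ι) {B : ∀ i, Set (β i)} (hB : ∀ i, MeasurableSet (B i))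
    (h : ∀ i ∈ t, μ⟦X i ⁻¹' B i | m⟧ =ᵐ[μ] μ⟦Y i ⁻¹' B i | m⟧) :
    μ⟦⋂ i ∈ t, X i ⁻¹' B i | m⟧ =ᵐ[μ] μ⟦⋂ i ∈ t, Y i ⁻¹' B i | m⟧ := by
  have hXprod := (iCondIndepFun_iff m hm mβ X hX μ).1 hXci t fun i _ => ⟨B i, hB i, rfl⟩
  have hYprod := (iCondIndepFun_iff m hm mβ Y hY μ).1 hYci t fun i _ => ⟨B i, hB i, rfl⟩
  have h_factors := (Filter.eventually_all_finset t).2 h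
  filter_upwards [hXprod, hYprod, h_factors] with ω hXω hYω hω
  simp only [hXω, hYω, Finset.prod_apply]
  exact Finset.prod_congr rfl hω

end ProbabilityTheory

theorem stmt2_general {Ω I : Type*} {mΩ : MeasurableSpace Ω} [StandardBorelSpace Ω]
    (μ : Measure Ω) [IsProbabilityMeasure μ]
    {γ : Type*} {mγ : MeasurableSpace γ}
    {β : I → Type*} {mβ : ∀ i, MeasurableSpace (β i)}
    (S : Ω → γ) (X Y : ∀ i, Ω → β i)
    (hS : Measurable S) (hX : ∀ i, Measurable (X i)) (hY : ∀ i, Measurable (Y i))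
    (hdist : ∀ i, μ.map (fun ω => (S ω, X i ω)) = μ.map (fun ω => (S ω, Y i ω)))
    (hXci : iCondIndepFun (MeasurableSpace.comap S mγ) hS.comap_le (m := mβ) X μ)
    (hYci : iCondIndepFun (MeasurableSpace.comap S mγ) hS.comap_le (m := mβ) Y μ) :
    μ.map (fun ω => (S ω, fun i => X i ω)) = μ.map (fun ω => (S ω, fun i => Y i ω)) := by
  refine Measure.ext_prod_squareCylinders fun A t B hA hB => ?_
  have h_joint : μ⟦⋂ i ∈ t, X i ⁻¹' B i | mγ.comap S⟧ =ᵐ[μ] μ⟦⋂ i ∈ t, Y i ⁻¹' B i | mγ.comap S⟧ :=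
    hXci.condExp_biInter_preimage_ae_eq hX hY hYci t hB fun i _ =>
      condExp_preimage_ae_eq_of_map_prodMk_eq hS (hX i) (hY i) (hdist i) (hB i)
  have hXt : MeasurableSet (⋂ i ∈ t, X i ⁻¹' B i) :=
    .biInter t.countable_toSet fun i _ => hX i (hB i)
  have hYt : MeasurableSet (⋂ i ∈ t, Y i ⁻¹' B i) :=
    .biInter t.countable_toSet fun i _ => hY i (hB i)
  have hbox : MeasurableSet (A ×ˢ (t : Set I).pi B) :=
    hA.prod (.pi t.countable_toSet fun i _ => hB i)
  rw [Measure.map_apply (hS.prodMk (measurable_pi_lambda _ hX)) hbox,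
    Measure.map_apply (hS.prodMk (measurable_pi_lambda _ hY)) hbox,
    mk_preimage_prod, mk_preimage_prod, preimage_pi_eq_biInter, preimage_pi_eq_biInter]
  exact (condExp_indicator_ae_eq_iff hS.comap_le hXt hYt).1 h_joint _ ⟨A, hA, rfl⟩

/-- If `(S, X i) =ᵈ (S, Y i)` for all `i` in a countable index set, and both families
`(X i)` and `(Y i)` are conditionally independent given `S`, then the joint laws of
`(S, (X i : i))` and `(S, (Y i : i))` coincide. -/
theorem stmt2 {Ω I : Type*} [Countable I] {mΩ : MeasurableSpace Ω} [StandardBorelSpace Ω]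
    (μ : Measure Ω) [IsProbabilityMeasure μ]
    {γ : Type*} {mγ : MeasurableSpace γ} [StandardBorelSpace γ]
    {β : I → Type*} {mβ : ∀ i, MeasurableSpace (β i)} [∀ i, StandardBorelSpace (β i)]
    (S : Ω → γ) (X Y : ∀ i, Ω → β i)
    (hS : Measurable S) (hX : ∀ i, Measurable (X i)) (hY : ∀ i, Measurable (Y i))
    (hdist : ∀ i, μ.map (fun ω => (S ω, X i ω)) = μ.map (fun ω => (S ω, Y i ω)))
    (hXci : iCondIndepFun (MeasurableSpace.comap S mγ) hS.comap_le (m := mβ) X μ)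
    (hYci : iCondIndepFun (MeasurableSpace.comap S mγ) hS.comap_le (m := mβ) Y μ) :
    μ.map (fun ω => (S ω, fun i => X i ω)) = μ.map (fun ω => (S ω, fun i => Y i ω)) :=
  stmt2_general (mΩ := mΩ) μ S X Y hS hX hY hdist hXci hYci
end

section
/- There exist two i.i.d. sequences Y = (Y_n) and Z = (Z_n) of ±1-valued random variables, each with trivial tail sigma-field, such that the tail sigma-field of the joint sequence ((Y_n, Z_n) : n ∈ ℕ) is nontrivial. Concretely: let P be uniform on [0,1]; given P, let X = (X_n) be i.i().d. with P[X_1 = 1 | P] = P, and Y = (Y_n) i.i.d. fair ±1 signs independent of X given P; set Z_n = X_n Y_n. Then Y and Z are i.i.d. sequences independent of P with trivial tail sigma-fields, but P is measurable with respect to the tail sigma-field of ((Y_n, Z_n)), hence that tail sigma-field is not trivial. -/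
open ProbabilityTheory MeasureTheory

/-- The tail sigma-field `⋂ k, σ(W n : n ≥ k)` of a sequence of random variables. -/
def tailSigma {Ω β : Type*} [MeasurableSpace β] (W : ℕ → Ω → β) : MeasurableSpace Ω :=
  ⨅ k : ℕ, ⨆ n : ℕ, ⨆ _ : k ≤ n, MeasurableSpace.comap (W n) inferInstance

/-- A sub-sigma-field is trivial for `μ` if all its events have probability `0` or `1`. -/
def TrivialSigma {Ω : Type*} {mΩ : MeasurableSpace Ω} (μ : Measure Ω)
    (m : MeasurableSpace Ω) : Prop :=
  ∀ A : Set Ω, MeasurableSet[m] A → μ A = 0 ∨ μ A = 1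

/-!
Take `P` uniform on `[0, 1]` and, independently, fair bits `ε n`; put `Y n = (-1) ^ ε n` and
`Z n = (-1) ^ (x n + ε n)`, where `x n` is the `(Nat.unpair n).2`-th binary digit of `P`.
For each fixed value of `P`, the bits `x n + ε n` are again independent and fair, so `(P, Z)` has
the same law as `(P, Y)`: both `Y` and `Z` are i.i.d., independent of `P`, and have trivial tails
by Kolmogorov's 0-1 law. But `x n` is a function of `(Y n, Z n)` and every binary digit of `P`
occurs as `x n` for arbitrarily large `n`, so `P` is measurable for the tail σ-field of
`((Y n, Z n))`, which is therefore not trivial.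
-/

open Set Filter
open scoped ENNReal

section Tail

variable {Ω β γ : Type*} [MeasurableSpace β] [MeasurableSpace γ]

lemma tailSigma_comp_le {h : β → γ} (hh : Measurable h) (W : ℕ → Ω → β) :
    tailSigma (fun n => h ∘ W n) ≤ tailSigma W :=
  iInf_mono fun _ => iSup₂_mono fun n _ => by
    rw [← MeasurableSpace.comap_comp]; exact MeasurableSpace.comap_mono hh.comap_le

lemma measurable_tailSigma_unpair (D : ℕ → Ω → β) :
    Measurable[tailSigma (fun n => D (Nat.unpair n).2)] (fun ω k => D k ω) := by
  refine measurable_iff_comap_le.2 (le_iInf fun K => Measurable.comap_le ?_)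
  refine @measurable_pi_lambda _ _ _ (⨆ n, ⨆ _ : K ≤ n,
    MeasurableSpace.comap (D (Nat.unpair n).2) inferInstance) _ _ fun k => ?_
  rw [show (fun ω => D k ω) = D (Nat.unpair (Nat.pair K k)).2 by rw [Nat.unpair_pair]]
  exact (comap_measurable _).mono
    (le_iSup₂_of_le (Nat.pair K k) (Nat.left_le_pair K k) le_rfl) le_rfl

lemma ProbabilityTheory.iIndepFun.trivialSigma_tailSigma [MeasurableSpace Ω] {μ : Measure Ω}
    [IsProbabilityMeasure μ] {W : ℕ → Ω → β} (hW : ∀ n, Measurable (W n))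
    (h : iIndepFun W μ) :
    TrivialSigma μ (tailSigma W) := by
  intro A hA
  rw [tailSigma, ← limsup_eq_iInf_iSup_of_nat] at hA
  exact measure_zero_or_one_of_measurableSet_limsup_atTop (fun n => (hW n).comap_le) h hA

end Tail

namespace MeasureTheory.MeasurePreserving

variable {Ω α G : Type*} [MeasurableSpace Ω] [MeasurableSpace α] [MeasurableSpace G]
  {μ : Measure Ω} {ν : Measure α} {ρ : Measure G}
  [IsProbabilityMeasure ν] [IsProbabilityMeasure ρ] {V : Ω → α × (ℕ → G)}

lemma map_eval_snd (hV : MeasurePreserving V μ (ν.prod (Measure.infinitePi fun _ => ρ)))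
    (n : ℕ) :
    μ.map (fun ω => (V ω).2 n) = ρ :=
  ((measurePreserving_eval_infinitePi _ n).comp (measurePreserving_snd.comp hV)).map_eq

lemma iIndepFun_eval_snd [IsProbabilityMeasure μ]
    (hV : MeasurePreserving V μ (ν.prod (Measure.infinitePi fun _ => ρ))) :
    iIndepFun (fun n ω => (V ω).2 n) μ := by
  have hVm := hV.measurable
  rw [iIndepFun_iff_map_fun_eq_infinitePi_map (by fun_prop)]
  simp only [hV.map_eval_snd]
  exact (measurePreserving_snd.comp hV).map_eq

lemma indepFun_fst_snd [IsProbabilityMeasure μ]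
    (hV : MeasurePreserving V μ (ν.prod (Measure.infinitePi fun _ => ρ))) :
    IndepFun (fun ω => (V ω).1) (fun ω => (V ω).2) μ := by
  have hVm := hV.measurable
  rw [indepFun_iff_map_prod_eq_prod_map_map (by fun_prop) (by fun_prop)]
  change μ.map V = (μ.map (Prod.fst ∘ V)).prod (μ.map (Prod.snd ∘ V))
  rw [(measurePreserving_fst.comp hV).map_eq, (measurePreserving_snd.comp hV).map_eq]
  exact hV.map_eq

lemma indep_iSup_comap_comp_eval_snd [IsProbabilityMeasure μ] {β γ : Type*} [MeasurableSpace β]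
    [MeasurableSpace γ] (hV : MeasurePreserving V μ (ν.prod (Measure.infinitePi fun _ => ρ)))
    {f : α → γ} (hf : Measurable f) {g : G → β} (hg : Measurable g) :
    Indep (⨆ n, MeasurableSpace.comap (fun ω => g ((V ω).2 n)) inferInstance)
      (MeasurableSpace.comap (fun ω => f (V ω).1) inferInstance) μ := by
  have hgB : Measurable fun (b : ℕ → G) n => g (b n) := by fun_prop
  refine indep_of_indep_of_le_left (hV.indepFun_fst_snd.comp hf hgB).symm (iSup_le fun n => ?_)
  exact ((measurable_pi_apply n).comp
    (comap_measurable ((fun b n => g (b n)) ∘ fun ω => (V ω).2))).comap_le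

end MeasureTheory.MeasurePreserving

lemma measurePreserving_prodMk_add_infinitePi {α G : Type*} [MeasurableSpace α]
    [MeasurableSpace G] [AddGroup G] [MeasurableAdd₂ G] {ν : Measure α} {ρ : Measure G}
    [IsProbabilityMeasure ν] [IsProbabilityMeasure ρ] [ρ.IsAddLeftInvariant]
    {x : α → ℕ → G} (hx : Measurable x) :
    MeasurePreserving (fun p : α × (ℕ → G) => (p.1, x p.1 + p.2))
      (ν.prod (Measure.infinitePi fun _ => ρ)) (ν.prod (Measure.infinitePi fun _ => ρ)) := by
  refine (MeasurePreserving.id ν).skew_product (g := fun a y => x a + y)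
    ((hx.comp measurable_fst).add measurable_snd) (ae_of_all _ fun a => ?_)
  rw [show (x a + ·) = fun y n => x a n + y n from rfl, Measure.infinitePi_map_pi _
    fun n => measurable_const_add (x a n)]
  simp only [map_add_left_eq_self]

lemma Real.measurable_digits (b : ℕ) [NeZero b] (k : ℕ) :
    Measurable fun x : ℝ => Real.digits x b k :=
  measurable_from_nat.comp (Nat.measurable_floor.comp (measurable_mul_const _))

lemma Real.map_ofDigits_digits_restrict_Icc {b : ℕ} [NeZero b] (hb : 1 < b) :
    (volume.restrict (Icc (0 : ℝ) 1)).map (fun x => Real.ofDigits (Real.digits x b)) =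
      volume.restrict (Icc 0 1) := by
  rw [← restrict_Ico_eq_restrict_Icc]
  conv_rhs => rw [← Measure.map_id (μ := volume.restrict (Ico (0 : ℝ) 1))]
  exact Measure.map_congr
    ((ae_restrict_mem measurableSet_Ico).mono fun x hx => Real.ofDigits_digits hb hx)

noncomputable section

namespace JointTail

def fairBit : Measure (Fin 2) := (2 : ℝ≥0∞)⁻¹ • Measure.count

instance : IsProbabilityMeasure fairBit :=
  ⟨by simp [fairBit, Measure.count_univ, ENNReal.inv_mul_cancel]⟩

instance : fairBit.IsAddLeftInvariant := by
  unfold fairBit; infer_instance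

def signOf (d : Fin 2) : ℤ := if d = 0 then 1 else -1

def bitOf (z : ℤ) : Fin 2 := if z = 1 then 0 else 1

lemma bitOf_signOf (d : Fin 2) : bitOf (signOf d) = d := by
  fin_cases d <;> rfl

lemma signOf_eq_one_or_eq_neg_one (d : Fin 2) : signOf d = 1 ∨ signOf d = -1 := by
  unfold signOf; split_ifs <;> simp

-- Each binary digit of `a` is repeated at infinitely many indices `n`, so it survives in the tail.
def digitSeq (a : ℝ) (n : ℕ) : Fin 2 := Real.digits a 2 (Nat.unpair n).2

lemma measurable_digitSeq : Measurable digitSeq :=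
  measurable_pi_lambda _ fun _ => Real.measurable_digits 2 _

instance : IsProbabilityMeasure (volume.restrict (Icc (0 : ℝ) 1)) :=
  ⟨by simp⟩

abbrev Ω : Type := ℝ × (ℕ → Fin 2)

def μ : Measure Ω :=
  (volume.restrict (Icc (0 : ℝ) 1)).prod (Measure.infinitePi fun _ => fairBit)

instance : IsProbabilityMeasure μ := by
  unfold μ; infer_instance

def P (ω : Ω) : ℝ := Real.ofDigits (Real.digits ω.1 2)

def twist (ω : Ω) : Ω := (ω.1, digitSeq ω.1 + ω.2)

def signSeq (V : Ω → Ω) (n : ℕ) (ω : Ω) : ℤ := signOf ((V ω).2 n)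

lemma measurable_P : Measurable P :=
  Real.continuous_ofDigits.measurable.comp
    (measurable_pi_lambda _ fun k => (Real.measurable_digits 2 k).comp measurable_fst)

lemma map_P : μ.map P = volume.restrict (Icc (0 : ℝ) 1) := by
  have h : Measurable fun x : ℝ => Real.ofDigits (Real.digits x 2) :=
    Real.continuous_ofDigits.measurable.comp (measurable_pi_lambda _ (Real.measurable_digits 2))
  rw [show P = (fun x => Real.ofDigits (Real.digits x 2)) ∘ Prod.fst from rfl,
    ← Measure.map_map h measurable_fst, μ, measurePreserving_fst.map_eq,
    Real.map_ofDigits_digits_restrict_Icc one_lt_two]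

lemma measurePreserving_twist : MeasurePreserving twist μ μ :=
  measurePreserving_prodMk_add_infinitePi measurable_digitSeq

lemma measurable_signSeq {V : Ω → Ω} (hV : Measurable V) (n : ℕ) : Measurable (signSeq V n) :=
  (measurable_of_finite signOf).comp ((measurable_pi_apply n).comp (measurable_snd.comp hV))

section SignSeq

variable {V : Ω → Ω} (hV : MeasurePreserving V μ μ)
include hV

lemma iIndepFun_signSeq : iIndepFun (signSeq V) μ :=
  hV.iIndepFun_eval_snd.comp (fun _ => signOf) fun _ => measurable_of_finite _

lemma map_signSeq (n : ℕ) : μ.map (signSeq V n) = fairBit.map signOf := by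
  have hVm := hV.measurable
  rw [show signSeq V n = signOf ∘ fun ω => (V ω).2 n from rfl,
    ← Measure.map_map (measurable_of_finite _) (by fun_prop), hV.map_eval_snd n]

lemma indep_signSeq_P (hV₁ : ∀ ω, (V ω).1 = ω.1) :
    Indep (⨆ n, MeasurableSpace.comap (signSeq V n) inferInstance)
      (MeasurableSpace.comap P inferInstance) μ := by
  have hP : P = fun ω => Real.ofDigits (Real.digits (V ω).1 2) := by
    funext ω; rw [hV₁]; rfl
  rw [hP]
  exact hV.indep_iSup_comap_comp_eval_snd
    (Real.continuous_ofDigits.measurable.comp (measurable_pi_lambda _ (Real.measurable_digits 2)))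
    (measurable_of_finite signOf)

end SignSeq

lemma measurable_P_tailSigma :
    Measurable[tailSigma fun n ω => (signSeq id n ω, signSeq twist n ω)] P := by
  have hdigits : (fun n ω => Real.digits (ω : Ω).1 2 (Nat.unpair n).2) =
      fun n => (fun yz : ℤ × ℤ => bitOf yz.2 - bitOf yz.1) ∘
        fun ω => (signSeq id n ω, signSeq twist n ω) := by
    funext n ω
    simp [signSeq, twist, bitOf_signOf, digitSeq]
  have hle : tailSigma (fun n ω => Real.digits (ω : Ω).1 2 (Nat.unpair n).2) ≤
      tailSigma fun n ω => (signSeq id n ω, signSeq twist n ω) := by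
    rw [hdigits]; exact tailSigma_comp_le (measurable_of_countable _) _
  exact Real.continuous_ofDigits.measurable.comp
    ((measurable_tailSigma_unpair fun k (ω : Ω) => Real.digits ω.1 2 k).mono hle le_rfl)

lemma not_trivialSigma_tailSigma :
    ¬ TrivialSigma μ (tailSigma fun n ω => (signSeq id n ω, signSeq twist n ω)) := by
  have hhalf : μ (P ⁻¹' Icc 0 2⁻¹) = 2⁻¹ := by
    rw [← Measure.map_apply measurable_P measurableSet_Icc, map_P,
      Measure.restrict_apply measurableSet_Icc,
      inter_eq_left.2 (Icc_subset_Icc le_rfl (by norm_num)), Real.volume_Icc,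
      sub_zero, ENNReal.ofReal_inv_of_pos two_pos, ENNReal.ofReal_ofNat]
  intro h
  rcases h _ (measurable_P_tailSigma measurableSet_Icc) with h | h <;>
    rw [hhalf] at h <;> norm_num at h

end JointTail

end

open JointTail

/-- There exist two i.i.d. `±1`-valued sequences `Y`, `Z`, each independent of a
uniform-[0,1] random variable `P` and each with a trivial tail sigma-field, such that
`P` is measurable with respect to the tail sigma-field of the joint sequence
`((Y n, Z n) : n)`, which is therefore nontrivial. -/
theorem stmt6 :
    ∃ (Ω : Type) (mΩ : MeasurableSpace Ω) (μ : Measure Ω) (_ : IsProbabilityMeasure μ)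
      (Y Z : ℕ → Ω → ℤ) (P : Ω → ℝ),
      (∀ n, Measurable (Y n)) ∧ (∀ n, Measurable (Z n)) ∧ Measurable P ∧
      (∀ n ω, Y n ω = 1 ∨ Y n ω = -1) ∧ (∀ n ω, Z n ω = 1 ∨ Z n ω = -1) ∧
      iIndepFun (m := fun _ : ℕ => (inferInstance : MeasurableSpace ℤ)) Y μ ∧
      (∀ n, μ.map (Y n) = μ.map (Y 0)) ∧
      iIndepFun (m := fun _ : ℕ => (inferInstance : MeasurableSpace ℤ)) Z μ ∧
      (∀ n, μ.map (Z n) = μ.map (Z 0)) ∧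
      Indep (⨆ n, MeasurableSpace.comap (Y n) inferInstance)
        (MeasurableSpace.comap P inferInstance) μ ∧
      Indep (⨆ n, MeasurableSpace.comap (Z n) inferInstance)
        (MeasurableSpace.comap P inferInstance) μ ∧
      μ.map P = volume.restrict (Set.Icc (0 : ℝ) 1) ∧
      TrivialSigma μ (tailSigma Y) ∧ TrivialSigma μ (tailSigma Z) ∧
      Measurable[tailSigma (fun n ω => (Y n ω, Z n ω))] P ∧
      ¬ TrivialSigma μ (tailSigma (fun n ω => (Y n ω, Z n ω))) := by
  have hY : MeasurePreserving id μ μ := MeasurePreserving.id μ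
  have hZ : MeasurePreserving twist μ μ := measurePreserving_twist
  exact ⟨Ω, _, μ, inferInstance, signSeq id, signSeq twist, P,
    measurable_signSeq hY.measurable, measurable_signSeq hZ.measurable, measurable_P,
    fun _ _ => signOf_eq_one_or_eq_neg_one _, fun _ _ => signOf_eq_one_or_eq_neg_one _,
    iIndepFun_signSeq hY, fun n => (map_signSeq hY n).trans (map_signSeq hY 0).symm,
    iIndepFun_signSeq hZ, fun n => (map_signSeq hZ n).trans (map_signSeq hZ 0).symm,
    indep_signSeq_P hY fun _ => rfl, indep_signSeq_P hZ fun _ => rfl, map_P,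
    (iIndepFun_signSeq hY).trivialSigma_tailSigma (measurable_signSeq hY.measurable),
    (iIndepFun_signSeq hZ).trivialSigma_tailSigma (measurable_signSeq hZ.measurable),
    measurable_P_tailSigma, not_trivialSigma_tailSigma⟩
end

section
/- Let G be a finite DAG and K a CLIC of G. Define, for indices α, β ∈ I_K^G, α ∼_K β if there is a bijection φ : Dom(α) → Dom(β) such that for each v ∈ Dom(α) there exists κ ∈ K with C_v ⊆ Dom(κ) and κ(α|_{C_v}) = β|_{C_{φ(v)}}. Then ∼_K is an equivalence relation on I_K^G. -/
/-- A set `C` of vertices is downward-closed for the strict order `prec`. -/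
def IsDownClosed {V : Type*} (prec : V → V → Prop) (C : Set V) : Prop :=
  ∀ ⦃v w : V⦄, prec v w → w ∈ C → v ∈ C

/-- The closure `C_v = {w : w ⪯ v}` of a single vertex. -/
def vertexClosure {V : Type*} (prec : V → V → Prop) (v : V) : Set V :=
  {w | w = v ∨ prec w v}

/-- A local isomorphism of the DAG `(V, E)`: a directed-graph isomorphism
`κ : C_src → C_tgt` between closures of single vertices. -/
structure LocalIso {V : Type*} (E : V → V → Prop) where
  src : V
  tgt : V
  toFun : V → V
  bijOn : Set.BijOn toFun (vertexClosure (Relation.TransGen E) src)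
    (vertexClosure (Relation.TransGen E) tgt)
  mapsSrc : toFun src = tgt
  edgeIff : ∀ a ∈ vertexClosure (Relation.TransGen E) src,
    ∀ b ∈ vertexClosure (Relation.TransGen E) src, (E a b ↔ E (toFun a) (toFun b))

/-- A consistent local isomorphism class (CLIC): a collection of local isomorphisms
containing all identities, closed under inversion, composition and restriction to the
closure of any vertex of the domain, and containing every local isomorphism which
agrees pointwise with members of `K`. -/
structure IsCLIC {V : Type*} (E : V → V → Prop) (K : Set (LocalIso E)) : Prop where
  mem_id : ∀ v : V, ∃ κ ∈ K, κ.src = v ∧ κ.tgt = v ∧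
    ∀ u ∈ vertexClosure (Relation.TransGen E) v, κ.toFun u = u
  mem_inv : ∀ κ ∈ K, ∃ κ' ∈ K, κ'.src = κ.tgt ∧ κ'.tgt = κ.src ∧
    ∀ u ∈ vertexClosure (Relation.TransGen E) κ.src, κ'.toFun (κ.toFun u) = u
  mem_comp : ∀ κ₁ ∈ K, ∀ κ₂ ∈ K, κ₁.tgt = κ₂.src →
    ∃ κ₃ ∈ K, κ₃.src = κ₁.src ∧ κ₃.tgt = κ₂.tgt ∧
      ∀ u ∈ vertexClosure (Relation.TransGen E) κ₁.src,
        κ₃.toFun u = κ₂.toFun (κ₁.toFun u)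
  mem_restrict : ∀ κ ∈ K, ∀ u ∈ vertexClosure (Relation.TransGen E) κ.src,
    ∃ κ' ∈ K, κ'.src = u ∧ κ'.tgt = κ.toFun u ∧
      ∀ a ∈ vertexClosure (Relation.TransGen E) u, κ'.toFun a = κ.toFun a
  mem_saturate : ∀ κ : LocalIso E,
    (∀ u ∈ vertexClosure (Relation.TransGen E) κ.src,
      ∃ κ' ∈ K, κ'.src = u ∧ κ'.tgt = κ.toFun u) → κ ∈ K


/-- A partially-defined index: a function together with its intended domain
(values outside `dom` are irrelevant). -/
structure IndexOn (V : Type*) where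
  dom : Set V
  val : V → ℕ

/-- Membership in `I_K^G`: the domain is downward-closed and no non-identity local
isomorphism of `K` fixes a restriction `α|_{C_v}`. -/
def MemIK {V : Type*} (E : V → V → Prop) (K : Set (LocalIso E)) (α : IndexOn V) : Prop :=
  IsDownClosed (Relation.TransGen E) α.dom ∧
  ∀ v ∈ α.dom, ∀ κ ∈ K, κ.src = v →
    (¬ ∀ u ∈ vertexClosure (Relation.TransGen E) v, κ.toFun u = u) →
    ¬ ∀ u ∈ vertexClosure (Relation.TransGen E) v, α.val (κ.toFun u) = α.val u

/-- The equivalence `α ∼_K β` on indices: a bijection `φ : Dom α → Dom β` such that for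
each `v ∈ Dom α` some `κ ∈ K` carries `α|_{C_v}` to `β|_{C_{φ v}}`. -/
def IndexEquiv {V : Type*} (E : V → V → Prop) (K : Set (LocalIso E))
    (α β : IndexOn V) : Prop :=
  ∃ φ : V → V, Set.BijOn φ α.dom β.dom ∧
    ∀ v ∈ α.dom, ∃ κ ∈ K, κ.src = v ∧ κ.tgt = φ v ∧
      ∀ u ∈ vertexClosure (Relation.TransGen E) v, β.val (κ.toFun u) = α.val u

/-- `∼_K` is an equivalence relation on `I_K^G`. -/
theorem stmt13 {V : Type*} [Fintype V] (E : V → V → Prop)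
    (hacyc : ∀ v : V, ¬ Relation.TransGen E v v)
    (K : Set (LocalIso E)) (hK : IsCLIC E K) :
    Equivalence (fun α β : {α : IndexOn V // MemIK E K α} =>
      IndexEquiv E K α.1 β.1) := by
  constructor
  · -- reflexivity
    intro α
    refine ⟨id, Set.bijOn_id _, fun v hv => ?_⟩
    obtain ⟨κ, hκK, hs, ht, hid⟩ := hK.mem_id v
    exact ⟨κ, hκK, hs, ht, fun u hu => by rw [hid u hu]⟩
  · -- symmetry
    rintro α β ⟨φ, hφ, hloc⟩
    rcases isEmpty_or_nonempty V with hV | hV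
    · have h1 : α.1.dom = ∅ := Set.eq_empty_of_isEmpty _
      have h2 : β.1.dom = ∅ := Set.eq_empty_of_isEmpty _
      exact ⟨id, by rw [h1, h2]; exact Set.bijOn_empty id,
        fun w hw => by simp [h2] at hw⟩
    refine ⟨Function.invFunOn φ α.1.dom, hφ.symm hφ.invOn_invFunOn.symm, fun w hw => ?_⟩
    set v := Function.invFunOn φ α.1.dom w with hv
    have hvmem : v ∈ α.1.dom := hφ.surjOn.mapsTo_invFunOn hw
    have hφv : φ v = w := hφ.invOn_invFunOn.2 hw
    obtain ⟨κ, hκK, hs, ht, hval⟩ := hloc v hvmem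
    obtain ⟨κ', hκ'K, hs', ht', hinv⟩ := hK.mem_inv κ hκK
    refine ⟨κ', hκ'K, by rw [hs', ht, hφv], by rw [ht', hs], fun u hu => ?_⟩
    have hu' : u ∈ vertexClosure (Relation.TransGen E) κ.tgt := by
      rwa [ht, hφv]
    obtain ⟨a, ha, rfl⟩ := κ.bijOn.surjOn hu'
    rw [hinv a ha]
    have := hval a (by rwa [hs] at ha)
    exact this.symm
  · -- transitivity
    rintro α β γ ⟨φ, hφ, hlocφ⟩ ⟨ψ, hψ, hlocψ⟩
    refine ⟨ψ ∘ φ, hψ.comp hφ, fun v hv => ?_⟩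
    obtain ⟨κ₁, h1K, hs1, ht1, hval1⟩ := hlocφ v hv
    obtain ⟨κ₂, h2K, hs2, ht2, hval2⟩ := hlocψ (φ v) (hφ.mapsTo hv)
    obtain ⟨κ₃, h3K, hs3, ht3, hcomp⟩ := hK.mem_comp κ₁ h1K κ₂ h2K (by rw [ht1, hs2])
    refine ⟨κ₃, h3K, by rw [hs3, hs1], by rw [ht3, ht2]; rfl, fun u hu => ?_⟩
    have hu1 : u ∈ vertexClosure (Relation.TransGen E) κ₁.src := by rwa [hs1]
    rw [hcomp u hu1]
    have hmem : κ₁.toFun u ∈ vertexClosure (Relation.TransGen E) (φ v) := by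
      have := κ₁.bijOn.mapsTo hu1
      rwa [ht1] at this
    rw [hval2 _ hmem, hval1 u (by rwa [hs1] at hu1)]
end

section
/- Let G be a finite DAG and K a CLIC of G. For α, β ∈ I_K^G, define D_{α,β} = {v ∈ Dom(α) : α|_{C_v} ∈ Restr(β, K)} and α ∧ β = α|_{D_{α,β}}. Then D_{α,β} is a downward-closed subset of Dom(α), and α ∧ β ∼_K β ∧ α. -/
/-- `D_{α,β}`: the set of `v ∈ Dom α` such that `α|_{C_v}` is `∼_K`-equivalent to a
restriction of `β` to a downward-closed subset of its domain. -/
def DSet {V : Type*} (E : V → V → Prop) (K : Set (LocalIso E)) (α β : IndexOn V) :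
    Set V :=
  {v | v ∈ α.dom ∧ ∃ C : Set V, IsDownClosed (Relation.TransGen E) C ∧ C ⊆ β.dom ∧
    IndexEquiv E K ⟨vertexClosure (Relation.TransGen E) v, α.val⟩ ⟨C, β.val⟩}

/-- `α ∧ β`: the restriction of `α` to `D_{α,β}`. -/
def wedge {V : Type*} (E : V → V → Prop) (K : Set (LocalIso E)) (α β : IndexOn V) :
    IndexOn V :=
  ⟨DSet E K α β, α.val⟩

/-! Write `v ~ w` when some `κ ∈ K` carries `α|_{C_v}` onto `β|_{C_w}`. Then `D_{α,β}` is the set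
of `v ∈ Dom α` with a partner `w ∈ Dom β`, and `D_{β,α}` is, via inverses in `K`, the set of
`w ∈ Dom β` with a partner `v ∈ Dom α`. Composing two witnesses yields a member of `K` carrying
an index in `I_K^G` to itself, which must fix the root, so `~` is a partial bijection between
the two sets; it is the bijection required by `∼_K`. Restricting a witness to `C_u` for
`u ≺ v` gives downward-closedness. -/

section VertexClosure

variable {V : Type*} {r : V → V → Prop}

theorem self_mem_vertexClosure (v : V) : v ∈ vertexClosure r v :=
  Or.inl rfl

theorem IsDownClosed.vertexClosure_subset {C : Set V} (hC : IsDownClosed r C) {v : V}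
    (hv : v ∈ C) : vertexClosure r v ⊆ C := by
  rintro w (rfl | hwv)
  exacts [hv, hC hwv hv]

variable [IsTrans V r]

theorem isDownClosed_vertexClosure (v : V) : IsDownClosed r (vertexClosure r v) := by
  rintro a b hab (rfl | hbv)
  exacts [Or.inr hab, Or.inr (_root_.trans hab hbv)]

theorem vertexClosure_subset_of_mem {u v : V} (hu : u ∈ vertexClosure r v) :
    vertexClosure r u ⊆ vertexClosure r v :=
  (isDownClosed_vertexClosure v).vertexClosure_subset hu

end VertexClosure

section LocalIsomorphisms

variable {V : Type*} {E : V → V → Prop} {K : Set (LocalIso E)} {α β γ : IndexOn V}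

local notation "Cl" => vertexClosure (Relation.TransGen E)

/-- `κ : C_src → C_tgt` carries `α|_{C_src}` onto `β|_{C_tgt}`. -/
def LocalIso.Transports (κ : LocalIso E) (α β : IndexOn V) : Prop :=
  ∀ u ∈ Cl κ.src, β.val (κ.toFun u) = α.val u

namespace IsCLIC

variable (hK : IsCLIC E K)
include hK

theorem exists_inv_transports {κ : LocalIso E} (hκ : κ ∈ K) (h : κ.Transports α β) :
    ∃ κ' ∈ K, κ'.src = κ.tgt ∧ κ'.tgt = κ.src ∧ κ'.Transports β α := by
  obtain ⟨κ', hκ', hsrc, htgt, hinv⟩ := hK.mem_inv κ hκ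
  refine ⟨κ', hκ', hsrc, htgt, fun a ha => ?_⟩
  obtain ⟨u, hu, rfl⟩ := κ.bijOn.surjOn (hsrc ▸ ha)
  rw [hinv u hu, h u hu]

theorem exists_comp_transports {κ₁ κ₂ : LocalIso E} (hκ₁ : κ₁ ∈ K) (hκ₂ : κ₂ ∈ K)
    (h : κ₁.tgt = κ₂.src) (h₁ : κ₁.Transports α β) (h₂ : κ₂.Transports β γ) :
    ∃ κ ∈ K, κ.src = κ₁.src ∧ κ.tgt = κ₂.tgt ∧ κ.Transports α γ := by
  obtain ⟨κ, hκ, hsrc, htgt, hcomp⟩ := hK.mem_comp κ₁ hκ₁ κ₂ hκ₂ h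
  refine ⟨κ, hκ, hsrc, htgt, fun u hu => ?_⟩
  rw [hsrc] at hu
  rw [hcomp u hu, h₂ _ (h ▸ κ₁.bijOn.mapsTo hu), h₁ u hu]

theorem exists_restrict_transports {κ : LocalIso E} (hκ : κ ∈ K) (h : κ.Transports α β)
    {u : V} (hu : u ∈ Cl κ.src) :
    ∃ κ' ∈ K, κ'.src = u ∧ κ'.tgt = κ.toFun u ∧ κ'.Transports α β := by
  obtain ⟨κ', hκ', hsrc, htgt, hagree⟩ := hK.mem_restrict κ hκ u hu
  refine ⟨κ', hκ', hsrc, htgt, fun a ha => ?_⟩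
  rw [hsrc] at ha
  rw [hagree a ha, h a (vertexClosure_subset_of_mem hu ha)]

end IsCLIC

theorem MemIK.tgt_eq_src (hα : MemIK E K α) {κ : LocalIso E} (hκ : κ ∈ K)
    (hsrc : κ.src ∈ α.dom) (h : κ.Transports α α) : κ.tgt = κ.src := by
  by_contra hne
  refine hα.2 κ.src hsrc κ hκ rfl (fun hfix => hne ?_) h
  rw [← κ.mapsSrc, hfix κ.src (self_mem_vertexClosure _)]

def LocallyEquiv (E : V → V → Prop) (K : Set (LocalIso E)) (α β : IndexOn V) (v w : V) :
    Prop :=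
  ∃ κ ∈ K, κ.src = v ∧ κ.tgt = w ∧ κ.Transports α β

namespace LocallyEquiv

variable {u v w : V}

theorem eq_of_self (hα : MemIK E K α) (h : LocallyEquiv E K α α v w) (hv : v ∈ α.dom) :
    w = v := by
  obtain ⟨κ, hκ, rfl, rfl, hκα⟩ := h
  exact hα.tgt_eq_src hκ hv hκα

variable (hK : IsCLIC E K)
include hK

theorem symm (h : LocallyEquiv E K α β v w) : LocallyEquiv E K β α w v := by
  obtain ⟨κ, hκ, rfl, rfl, hκα⟩ := h
  exact hK.exists_inv_transports hκ hκα

theorem comm : LocallyEquiv E K α β v w ↔ LocallyEquiv E K β α w v :=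
  ⟨symm hK, symm hK⟩

theorem trans (h₁ : LocallyEquiv E K α β u v) (h₂ : LocallyEquiv E K β γ v w) :
    LocallyEquiv E K α γ u w := by
  obtain ⟨κ₁, hκ₁, rfl, rfl, hκ₁α⟩ := h₁
  obtain ⟨κ₂, hκ₂, hsrc, rfl, hκ₂β⟩ := h₂
  exact hK.exists_comp_transports hκ₁ hκ₂ hsrc.symm hκ₁α hκ₂β

theorem right_unique (hβ : MemIK E K β) {w' : V} (h : LocallyEquiv E K α β v w)
    (h' : LocallyEquiv E K α β v w') (hw : w ∈ β.dom) : w = w' :=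
  eq_of_self hβ ((h.symm hK).trans hK h') hw |>.symm

theorem left_unique (hα : MemIK E K α) {v' : V} (h : LocallyEquiv E K α β v w)
    (h' : LocallyEquiv E K α β v' w) (hv : v ∈ α.dom) : v = v' :=
  eq_of_self hα (h.trans hK (h'.symm hK)) hv |>.symm

theorem exists_restrict (h : LocallyEquiv E K α β v w) (hu : u ∈ Cl v) :
    ∃ u' ∈ Cl w, LocallyEquiv E K α β u u' := by
  obtain ⟨κ, hκ, rfl, rfl, hκα⟩ := h
  exact ⟨κ.toFun u, κ.bijOn.mapsTo hu, hK.exists_restrict_transports hκ hκα hu⟩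

end LocallyEquiv

theorem mem_DSet_iff (hK : IsCLIC E K) (hβ : IsDownClosed (Relation.TransGen E) β.dom)
    {v : V} : v ∈ DSet E K α β ↔ v ∈ α.dom ∧ ∃ w ∈ β.dom, LocallyEquiv E K α β v w := by
  constructor
  · rintro ⟨hv, C, -, hCβ, φ, hφ, hφK⟩
    obtain ⟨κ, hκ, rfl, htgt, hκα⟩ := hφK _ (self_mem_vertexClosure _)
    exact ⟨hv, _, hCβ (hφ.mapsTo (self_mem_vertexClosure _)), κ, hκ, rfl, htgt, hκα⟩
  · rintro ⟨hv, w, hw, κ, hκ, rfl, rfl, hκα⟩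
    refine ⟨hv, Cl κ.tgt, isDownClosed_vertexClosure _, hβ.vertexClosure_subset hw,
      κ.toFun, κ.bijOn, fun u hu => ?_⟩
    obtain ⟨κ', hκ', rfl, htgt, hκ'α⟩ := hK.exists_restrict_transports hκ hκα hu
    exact ⟨κ', hκ', rfl, htgt, hκ'α⟩

theorem isDownClosed_DSet (hK : IsCLIC E K) (hα : IsDownClosed (Relation.TransGen E) α.dom)
    (hβ : IsDownClosed (Relation.TransGen E) β.dom) :
    IsDownClosed (Relation.TransGen E) (DSet E K α β) := by
  intro u v huv hv
  obtain ⟨hvα, w, hw, hvw⟩ := (mem_DSet_iff hK hβ).1 hv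
  obtain ⟨u', hu'w, huu'⟩ := hvw.exists_restrict hK (Or.inr huv)
  exact (mem_DSet_iff hK hβ).2 ⟨hα huv hvα, u', hβ.vertexClosure_subset hw hu'w, huu'⟩

end LocalIsomorphisms

theorem Set.exists_bijOn_of_unique {α : Type*} {R : α → α → Prop} {s t : Set α}
    (hright : ∀ a b b', R a b → R a b' → b ∈ t → b = b')
    (hleft : ∀ a a' b, R a b → R a' b → a ∈ s → a = a') :
    ∃ f : α → α, Set.BijOn f {a ∈ s | ∃ b ∈ t, R a b} {b ∈ t | ∃ a ∈ s, R a b} ∧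
      ∀ a ∈ {a ∈ s | ∃ b ∈ t, R a b}, R a (f a) := by
  classical
  set f : α → α := fun a => if h : ∃ b ∈ t, R a b then h.choose else a
  have hf : ∀ a ∈ {a ∈ s | ∃ b ∈ t, R a b}, f a ∈ t ∧ R a (f a) := fun a ha => by
    simp only [f, dif_pos ha.2]
    exact ha.2.choose_spec
  refine ⟨f, ⟨fun a ha => ⟨(hf a ha).1, a, ha.1, (hf a ha).2⟩, ?_, ?_⟩, fun a ha => (hf a ha).2⟩
  · intro a ha a' ha' heq
    exact hleft a a' (f a) (hf a ha).2 (heq ▸ (hf a' ha').2) ha.1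
  · rintro b ⟨hb, a, ha, hab⟩
    have ha' : a ∈ {a ∈ s | ∃ b ∈ t, R a b} := ⟨ha, b, hb, hab⟩
    exact ⟨a, ha', (hright a b (f a) hab (hf a ha').2 hb).symm⟩

theorem stmt15_general {V : Type*} (E : V → V → Prop)
    (K : Set (LocalIso E)) (hK : IsCLIC E K)
    (α β : IndexOn V) (hα : MemIK E K α) (hβ : MemIK E K β) :
    (DSet E K α β ⊆ α.dom ∧ IsDownClosed (Relation.TransGen E) (DSet E K α β)) ∧
    IndexEquiv E K (wedge E K α β) (wedge E K β α) := by
  refine ⟨⟨fun v hv => hv.1, isDownClosed_DSet hK hα.1 hβ.1⟩, ?_⟩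
  have hDαβ : DSet E K α β = {v ∈ α.dom | ∃ w ∈ β.dom, LocallyEquiv E K α β v w} :=
    Set.ext fun v => mem_DSet_iff hK hβ.1
  have hDβα : DSet E K β α = {w ∈ β.dom | ∃ v ∈ α.dom, LocallyEquiv E K α β v w} :=
    Set.ext fun _ => (mem_DSet_iff hK hα.1).trans
      (and_congr_right' (exists_congr fun _ => and_congr_right' (LocallyEquiv.comm hK)))
  obtain ⟨φ, hφ, hφK⟩ := Set.exists_bijOn_of_unique (R := LocallyEquiv E K α β)
    (fun _ _ _ h h' hw => h.right_unique hK hβ h' hw)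
    (fun _ _ _ h h' hv => h.left_unique hK hα h' hv)
  refine ⟨φ, by simpa only [wedge, hDαβ, hDβα] using hφ, fun v hv => ?_⟩
  obtain ⟨κ, hκ, rfl, hφv, hκα⟩ := hφK v (hDαβ ▸ hv)
  exact ⟨κ, hκ, rfl, hφv, hκα⟩

/-- `D_{α,β}` is downward-closed in `Dom α` and `α ∧ β ∼_K β ∧ α`. -/
theorem stmt15 {V : Type*} [Fintype V] (E : V → V → Prop)
    (hacyc : ∀ v : V, ¬ Relation.TransGen E v v)
    (K : Set (LocalIso E)) (hK : IsCLIC E K)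
    (α β : IndexOn V) (hα : MemIK E K α) (hβ : MemIK E K β) :
    (DSet E K α β ⊆ α.dom ∧ IsDownClosed (Relation.TransGen E) (DSet E K α β)) ∧
    IndexEquiv E K (wedge E K α β) (wedge E K β α) :=
  stmt15_general E K hK α β hα hβ
end

section
/- Let X and Y be random variables taking values in Borel spaces such that X has the same distribution as f(Y) for some measurable function f. Then, on a sufficiently rich probability space carrying X, there exists a random variable Y' with the same distribution as Y such that X = f(Y') almost surely. -/
open ProbabilityTheory MeasureTheory Set

namespace Stmt18Aux

variable {α : Type*} {mα : MeasurableSpace α}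

/-- Quantile function of the conditional CDF. -/
noncomputable def q (ρ : Measure (α × ℝ)) (a : α) (u : ℝ) : ℝ :=
  sInf {r : ℝ | u ≤ condCDF ρ a r}

lemma q_le_iff (ρ : Measure (α × ℝ)) (a : α) {u : ℝ} (h0 : 0 < u) (h1 : u < 1) (t : ℝ) :
    q ρ a u ≤ t ↔ u ≤ condCDF ρ a t := by
  set F := condCDF ρ a with hF
  set S := {r : ℝ | u ≤ F r} with hS
  have hne : S.Nonempty := by
    have := (tendsto_condCDF_atTop ρ a).eventually (eventually_ge_nhds h1)
    exact this.exists
  have hbdd : BddBelow S := by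
    have := (tendsto_condCDF_atBot ρ a).eventually (eventually_lt_nhds h0)
    obtain ⟨r₀, hr₀⟩ := Filter.eventually_atBot.mp this
    refine ⟨r₀, fun r hrS => ?_⟩
    by_contra hlt
    exact absurd hrS (not_le.mpr (hr₀ r (le_of_lt (not_le.mp hlt))))
  constructor
  · intro h
    have key : ∀ s, sInf S < s → u ≤ F s := by
      intro s hs
      obtain ⟨r, hrS, hrs⟩ := exists_lt_of_csInf_lt hne hs
      exact le_trans hrS (F.mono hrs.le)
    have hmem : u ≤ F (sInf S) := by
      have hc : Filter.Tendsto F (nhdsWithin (sInf S) (Ioi (sInf S))) (nhds (F (sInf S))) :=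
        ((F.right_continuous (sInf S)).tendsto).mono_left
          (nhdsWithin_mono _ Ioi_subset_Ici_self)
      refine ge_of_tendsto hc ?_
      exact eventually_mem_nhdsWithin.mono fun s hs => key s hs
    exact le_trans hmem (F.mono h)
  · intro h
    exact csInf_le hbdd h

/-- Sampling function: a measurable map from `α × ℝ` to `ℝ` that, given `a` and a uniform
random input, samples from the conditional distribution `(condCDF ρ a).measure`. -/
noncomputable def G (ρ : Measure (α × ℝ)) (p : α × ℝ) : ℝ :=
  if p.2 ∈ Ioo (0 : ℝ) 1 then q ρ p.1 p.2 else q ρ p.1 (1/2)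

lemma measurable_G (ρ : Measure (α × ℝ)) : Measurable (G ρ) := by
  apply measurable_of_Iic
  intro t
  have hset : G ρ ⁻¹' Iic t =
      ({p : α × ℝ | p.2 ∈ Ioo (0:ℝ) 1} ∩ {p : α × ℝ | p.2 ≤ condCDF ρ p.1 t}) ∪
      ({p : α × ℝ | p.2 ∈ Ioo (0:ℝ) 1}ᶜ ∩ {p : α × ℝ | 1/2 ≤ condCDF ρ p.1 t}) := by
    ext p
    by_cases hp : p.2 ∈ Ioo (0:ℝ) 1
    · simp only [mem_preimage, mem_Iic, G, if_pos hp, mem_union, mem_inter_iff, mem_setOf_eq,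
        mem_compl_iff, hp, not_true_eq_false, false_and, or_false, true_and]
      exact q_le_iff ρ p.1 hp.1 hp.2 t
    · simp only [mem_preimage, mem_Iic, G, if_neg hp, mem_union, mem_inter_iff, mem_setOf_eq,
        mem_compl_iff, hp, not_false_eq_true, true_and, false_and, false_or]
      exact q_le_iff ρ p.1 (by norm_num) (by norm_num) t
  rw [hset]
  have h1 : MeasurableSet {p : α × ℝ | p.2 ∈ Ioo (0:ℝ) 1} :=
    measurable_snd measurableSet_Ioo
  have h2 : MeasurableSet {p : α × ℝ | p.2 ≤ condCDF ρ p.1 t} :=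
    measurableSet_le measurable_snd ((measurable_condCDF ρ t).comp measurable_fst)
  have h3 : MeasurableSet {p : α × ℝ | 1/2 ≤ condCDF ρ p.1 t} :=
    measurableSet_le measurable_const ((measurable_condCDF ρ t).comp measurable_fst)
  exact (h1.inter h2).union (h1.compl.inter h3)

lemma map_G (ρ : Measure (α × ℝ)) [IsFiniteMeasure ρ] (a : α) :
    (volume.restrict (Icc (0:ℝ) 1)).map (fun u => G ρ (a, u)) = (condCDF ρ a).measure := by
  have hGm : Measurable fun u => G ρ (a, u) := (measurable_G ρ).comp measurable_prodMk_left
  haveI : IsFiniteMeasure ((volume.restrict (Icc (0:ℝ) 1)).map (fun u => G ρ (a, u))) := by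
    haveI : IsFiniteMeasure (volume.restrict (Icc (0:ℝ) 1)) :=
      ⟨by rw [Measure.restrict_apply_univ]; simp [Real.volume_Icc]⟩
    exact Measure.isFiniteMeasure_map _ _
  refine Measure.ext_of_Iic _ _ (fun t => ?_)
  rw [Measure.map_apply hGm measurableSet_Iic,
    (condCDF ρ a).measure_Iic (tendsto_condCDF_atBot ρ a), sub_zero]
  set c := condCDF ρ a t with hc
  have hc0 : 0 ≤ c := condCDF_nonneg ρ a t
  have hc1 : c ≤ 1 := condCDF_le_one ρ a t
  set A := (fun u => G ρ (a, u)) ⁻¹' Iic t with hA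
  rw [Measure.restrict_apply (hGm measurableSet_Iic)]
  have hAe : A ∩ Ioo 0 1 = Ioo 0 1 ∩ Iic c := by
    ext u
    simp only [hA, mem_inter_iff, mem_preimage, mem_Iic, mem_Ioo]
    constructor
    · rintro ⟨hGu, hu0, hu1⟩
      refine ⟨⟨hu0, hu1⟩, ?_⟩
      rw [G, if_pos (show (a, u).2 ∈ Ioo (0:ℝ) 1 from ⟨hu0, hu1⟩)] at hGu
      exact (q_le_iff ρ a hu0 hu1 t).mp hGu
    · rintro ⟨⟨hu0, hu1⟩, huc⟩
      refine ⟨?_, hu0, hu1⟩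
      rw [G, if_pos (show (a, u).2 ∈ Ioo (0:ℝ) 1 from ⟨hu0, hu1⟩)]
      exact (q_le_iff ρ a hu0 hu1 t).mpr huc
  have heq : volume (A ∩ Icc 0 1) = volume (A ∩ Ioo 0 1) := by
    apply le_antisymm
    · have hsub : A ∩ Icc 0 1 ⊆ (A ∩ Ioo 0 1) ∪ {0, 1} := by
        rintro u ⟨huA, hu⟩
        rcases eq_or_lt_of_le hu.1 with h0 | h0
        · exact Or.inr (Or.inl h0.symm)
        rcases eq_or_lt_of_le hu.2 with h1 | h1
        · exact Or.inr (Or.inr h1)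
        exact Or.inl ⟨huA, h0, h1⟩
      have h01 : volume ({0, 1} : Set ℝ) = 0 := Set.Finite.measure_zero (by simp) _
      refine le_trans (measure_mono hsub) (le_trans (measure_union_le _ _) ?_)
      rw [h01, add_zero]
    · exact measure_mono (inter_subset_inter_right _ Ioo_subset_Icc_self)
  rw [heq, hAe]
  have hupper : volume (Ioo 0 1 ∩ Iic c) ≤ ENNReal.ofReal c := by
    have hsub : Ioo (0:ℝ) 1 ∩ Iic c ⊆ Ioc 0 c := fun u hu => ⟨hu.1.1, hu.2⟩
    simpa [Real.volume_Ioc] using measure_mono (μ := volume) hsub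
  have hlower : ENNReal.ofReal c ≤ volume (Ioo 0 1 ∩ Iic c) := by
    have hsub : Ioo (0:ℝ) c ⊆ Ioo 0 1 ∩ Iic c :=
      fun u hu => ⟨⟨hu.1, lt_of_lt_of_le hu.2 hc1⟩, hu.2.le⟩
    simpa [Real.volume_Ioo] using measure_mono (μ := volume) hsub
  exact le_antisymm hupper hlower

/-- The conditional-CDF kernel of `ρ`. -/
noncomputable def myκ (ρ : Measure (α × ℝ)) [IsFiniteMeasure ρ] : Kernel α ℝ :=
  Kernel.comap ((isCondKernelCDF_condCDF ρ).toKernel _) (fun a => ((), a))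
    measurable_prodMk_left

lemma myκ_apply (ρ : Measure (α × ℝ)) [IsFiniteMeasure ρ] (a : α) :
    myκ ρ a = (condCDF ρ a).measure := rfl

instance (ρ : Measure (α × ℝ)) [IsFiniteMeasure ρ] : IsMarkovKernel (myκ ρ) := by
  rw [myκ]; infer_instance

lemma compProd_myκ (ρ : Measure (α × ℝ)) [IsFiniteMeasure ρ] :
    ρ.fst ⊗ₘ myκ ρ = ρ := by
  have h := compProd_toKernel (isCondKernelCDF_condCDF ρ)
  have h1 : Kernel.const Unit ρ.fst ⊗ₖ Kernel.prodMkLeft Unit (myκ ρ) =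
      Kernel.const Unit ρ := by
    rw [← h]
    congr 1
  rw [Measure.compProd, h1, Kernel.const_apply]

lemma map_prod_G {Ω : Type*} {mΩ : MeasurableSpace Ω} (μ : Measure Ω) [IsProbabilityMeasure μ]
    (ρ : Measure (α × ℝ)) [IsProbabilityMeasure ρ]
    (X : Ω → α) (U : Ω → ℝ) (hX : Measurable X) (hU : Measurable U)
    (hUX : IndepFun U X μ)
    (hU_unif : μ.map U = volume.restrict (Icc (0:ℝ) 1))
    (hXlaw : μ.map X = ρ.fst) :
    μ.map (fun ω => (X ω, G ρ (X ω, U ω))) = ρ := by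
  haveI : IsProbabilityMeasure (volume.restrict (Icc (0:ℝ) 1)) :=
    ⟨by rw [Measure.restrict_apply_univ]; simp [Real.volume_Icc]⟩
  haveI : IsProbabilityMeasure (ρ.fst) := by
    rw [← hXlaw]; exact Measure.isProbabilityMeasure_map hX.aemeasurable
  have h1 : μ.map (fun ω => (X ω, U ω)) = (μ.map X).prod (μ.map U) :=
    (indepFun_iff_map_prod_eq_prod_map_map hX.aemeasurable hU.aemeasurable).mp hUX.symm
  have hh : Measurable fun p : α × ℝ => (p.1, G ρ p) :=
    measurable_fst.prodMk (measurable_G ρ)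
  have h2 : μ.map (fun ω => (X ω, G ρ (X ω, U ω))) =
      (μ.map (fun ω => (X ω, U ω))).map (fun p : α × ℝ => (p.1, G ρ p)) := by
    rw [Measure.map_map hh (hX.prodMk hU)]
    rfl
  rw [h2, h1, hXlaw, hU_unif]
  ext s hs
  rw [Measure.map_apply hh hs, Measure.prod_apply (hh hs)]
  conv_rhs => rw [← compProd_myκ ρ]
  rw [Measure.compProd_apply hs]
  refine lintegral_congr fun a => ?_
  have : Prod.mk a ⁻¹' ((fun p : α × ℝ => (p.1, G ρ p)) ⁻¹' s) =
      (fun u => G ρ (a, u)) ⁻¹' (Prod.mk a ⁻¹' s) := rfl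
  rw [this, myκ_apply, ← map_G ρ a]
  exact (Measure.map_apply (show Measurable fun u => G ρ (a, u) from
    (measurable_G ρ).comp measurable_prodMk_left) (measurable_prodMk_left hs)).symm

end Stmt18Aux

open Stmt18Aux in
/-- If `X =ᵈ f(Y)` for a measurable `f`, then on a probability space carrying `X`
which is rich enough (it supports a uniform random variable independent of `X`), there
exists `Y' =ᵈ Y` with `X = f(Y')` almost surely. -/
theorem stmt18 {Ω Ω₀ α β : Type*} {mΩ : MeasurableSpace Ω} {mΩ₀ : MeasurableSpace Ω₀}
    {mα : MeasurableSpace α} {mβ : MeasurableSpace β}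
    [StandardBorelSpace α] [StandardBorelSpace β] [Nonempty β]
    (μ : Measure Ω) [IsProbabilityMeasure μ]
    (μ₀ : Measure Ω₀) [IsProbabilityMeasure μ₀]
    (X : Ω → α) (Y : Ω₀ → β) (f : β → α)
    (hX : Measurable X) (hY : Measurable Y) (hf : Measurable f)
    (hdist : μ.map X = μ₀.map (fun ω => f (Y ω)))
    (hrich : ∃ U : Ω → ℝ, Measurable U ∧
      μ.map U = volume.restrict (Set.Icc (0 : ℝ) 1) ∧ IndepFun U X μ) :
    ∃ Y' : Ω → β, Measurable Y' ∧ μ.map Y' = μ₀.map Y ∧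
      ∀ᵐ ω ∂μ, X ω = f (Y' ω) := by
  obtain ⟨U, hU, hUunif, hUX⟩ := hrich
  obtain ⟨e, he⟩ := exists_measurableEmbedding_real β
  obtain ⟨i, hi⟩ := exists_measurableEmbedding_real α
  -- joint law of (f(Y), e(Y))
  set ρ : Measure (α × ℝ) := μ₀.map (fun ω => (f (Y ω), e (Y ω))) with hρ
  have hmeasρ : Measurable fun ω => (f (Y ω), e (Y ω)) :=
    (hf.comp hY).prodMk (he.measurable.comp hY)
  haveI : IsProbabilityMeasure ρ := Measure.isProbabilityMeasure_map hmeasρ.aemeasurable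
  have hfst : μ.map X = ρ.fst := by
    rw [hρ, Measure.fst_map_prodMk (show Measurable fun ω => e (Y ω) from he.measurable.comp hY), hdist]
  -- measurable retraction of e
  classical
  set ψ : ℝ → β := fun x => if h : x ∈ Set.range e then h.choose else Classical.arbitrary β
    with hψdef
  have hψe : ∀ b, ψ (e b) = b := by
    intro b
    have h : e b ∈ Set.range e := ⟨b, rfl⟩
    have := h.choose_spec
    simp only [hψdef, dif_pos h]
    exact he.injective this
  have hψ : Measurable ψ := by
    intro t ht
    have himage : ∀ x ∈ Set.range e, (ψ x ∈ t ↔ x ∈ e '' t) := by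
      rintro x ⟨b, rfl⟩
      rw [hψe b]
      exact ⟨fun h => ⟨b, h, rfl⟩, fun ⟨b', hb', hbe⟩ => (he.injective hbe) ▸ hb'⟩
    by_cases hd : Classical.arbitrary β ∈ t
    · have : ψ ⁻¹' t = e '' t ∪ (Set.range e)ᶜ := by
        ext x
        by_cases hx : x ∈ Set.range e
        · simp only [Set.mem_preimage, Set.mem_union, Set.mem_compl_iff, hx,
            not_true_eq_false, or_false, himage x hx]
        · simp only [Set.mem_preimage, Set.mem_union, Set.mem_compl_iff, hx, not_false_eq_true,
            or_true, iff_true, hψdef, dif_neg hx]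
          exact hd
      rw [this]
      exact (he.measurableSet_image' ht).union he.measurableSet_range.compl
    · have : ψ ⁻¹' t = e '' t := by
        ext x
        by_cases hx : x ∈ Set.range e
        · simp only [Set.mem_preimage, himage x hx]
        · simp only [Set.mem_preimage, hψdef, dif_neg hx]
          constructor
          · intro h; exact absurd h hd
          · rintro ⟨b', _, hbe⟩; exact absurd ⟨b', hbe⟩ hx
      rw [this]
      exact he.measurableSet_image' ht
  -- the candidate
  set Z : Ω → ℝ := fun ω => G ρ (X ω, U ω) with hZdef
  have hZ : Measurable Z := (measurable_G ρ).comp (hX.prodMk hU)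
  refine ⟨fun ω => ψ (Z ω), hψ.comp hZ, ?_, ?_⟩
  case _ =>
    -- joint law
    have hjoint : μ.map (fun ω => (X ω, Z ω)) = ρ :=
      map_prod_G μ ρ X U hX hU hUX hUunif hfst
    have hsnd : μ.map Z = ρ.snd := by
      rw [← hjoint, Measure.snd_map_prodMk hX]
    have hsnd' : ρ.snd = μ₀.map (fun ω => e (Y ω)) := by
      rw [hρ, Measure.snd_map_prodMk (show Measurable fun ω => f (Y ω) from hf.comp hY)]
    calc μ.map (fun ω => ψ (Z ω)) = (μ.map Z).map ψ := (Measure.map_map hψ hZ).symm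
      _ = (μ₀.map (fun ω => e (Y ω))).map ψ := by rw [hsnd, hsnd']
      _ = μ₀.map (fun ω => ψ (e (Y ω))) := Measure.map_map hψ (he.measurable.comp hY)
      _ = μ₀.map Y := by
          congr 1
          funext ω
          exact hψe (Y ω)
  case _ =>
    have hjoint : μ.map (fun ω => (X ω, Z ω)) = ρ :=
      map_prod_G μ ρ X U hX hU hUX hUunif hfst
    set T : Set (α × ℝ) := {p : α × ℝ | p.2 ∈ Set.range e ∧ f (ψ p.2) = p.1} with hT
    have hTmeas : MeasurableSet T := by
      have h1 : MeasurableSet {p : α × ℝ | p.2 ∈ Set.range e} :=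
        measurable_snd he.measurableSet_range
      have h2 : MeasurableSet {p : α × ℝ | f (ψ p.2) = p.1} := by
        have : {p : α × ℝ | f (ψ p.2) = p.1} = {p : α × ℝ | i (f (ψ p.2)) = i p.1} := by
          ext p
          simp only [mem_setOf_eq]
          exact ⟨fun h => by rw [h], fun h => hi.injective h⟩
        rw [this]
        exact measurableSet_eq_fun
          ((hi.measurable.comp hf).comp (hψ.comp measurable_snd))
          (hi.measurable.comp measurable_fst)
      exact h1.inter h2
    have hρT : ρ T = 1 := by
      rw [hρ, Measure.map_apply hmeasρ hTmeas]
      have : (fun ω => (f (Y ω), e (Y ω))) ⁻¹' T = Set.univ := by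
        ext ω
        simp only [Set.mem_preimage, hT, Set.mem_setOf_eq, Set.mem_univ, iff_true]
        exact ⟨⟨Y ω, rfl⟩, by rw [hψe (Y ω)]⟩
      rw [this, measure_univ]
    have hμT : μ {ω | (X ω, Z ω) ∈ T} = 1 := by
      rw [← hρT, ← hjoint, Measure.map_apply (hX.prodMk hZ) hTmeas]
      rfl
    have hmeasS : MeasurableSet {ω | (X ω, Z ω) ∈ T} := (hX.prodMk hZ) hTmeas
    have hcompl : μ {ω | (X ω, Z ω) ∈ T}ᶜ = 0 := by
      rw [measure_compl hmeasS (measure_ne_top μ _), hμT, measure_univ, tsub_self]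
    rw [ae_iff]
    refine measure_mono_null ?_ hcompl
    intro ω hω hmem
    have hmem' : (X ω, Z ω).2 ∈ Set.range e ∧ f (ψ (X ω, Z ω).2) = (X ω, Z ω).1 := hmem
    exact hω hmem'.2.symm
end
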